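/- Let X be a complete CAT(0) space and C₁, …, Cₘ nonempty closed convex subsets with ⋂ᵢ Cᵢ ≠ ∅, and let P_{Cᵢ} denote the metric projection onto Cᵢ. Then for any x₀ ∈ X the cyclic projection iterates xₙ := (P_{Cₘ} ∘ ⋯ ∘ P_{C₁})ⁿ(x₀) Δ-converge to some x* ∈ ⋂ᵢ₌₁ᵐ Cᵢ. -/

import Mathlib

open Filter Metric

variable {X : Type*} [MetricSpace X]

/-- Fixed point set of a self-map. -/
def FixSet (S : X → X) : Set X := {x | S x = x}

/-- Quasi-nonexpansive: nonempty fixed point set and `dist (S x) q ≤ dist x q`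
for every `x` and every fixed point `q`. -/
def QuasiNonexpansive (S : X → X) : Prop :=
  (FixSet S).Nonempty ∧ ∀ x q, q ∈ FixSet S → dist (S x) q ≤ dist x q

/-- Strongly quasi-nonexpansive. -/
def StronglyQuasiNonexpansive (S : X → X) : Prop :=
  QuasiNonexpansive S ∧
    ∀ x : ℕ → X, Bornology.IsBounded (Set.range x) →
      ∀ q ∈ FixSet S,
        Tendsto (fun n => dist (x n) q - dist (S (x n)) q) atTop (nhds 0) →
        Tendsto (fun n => dist (x n) (S (x n))) atTop (nhds 0)

/-- Complete CAT(0) (Hadamard) space: complete and every pair of points has a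
midpoint satisfying the CN (comparison) inequality. -/
def IsHadamard (X : Type*) [MetricSpace X] : Prop :=
  CompleteSpace X ∧
    ∀ x y : X, ∃ m : X, dist x m = dist x y / 2 ∧ dist y m = dist x y / 2 ∧
      ∀ z : X, dist z m ^ 2 ≤ (dist z x ^ 2 + dist z y ^ 2) / 2 - dist x y ^ 2 / 4

/-- `z` is an asymptotic center of the bounded sequence `x`. -/
def AsympCenter (x : ℕ → X) (z : X) : Prop :=
  ∀ y : X, limsup (fun n => dist z (x n)) atTop ≤ limsup (fun n => dist y (x n)) atTop

/-- Δ-convergence: `x` is bounded and `z` is an asymptotic center of every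
subsequence of `x`. -/
def DeltaConv (x : ℕ → X) (z : X) : Prop :=
  Bornology.IsBounded (Set.range x) ∧
    ∀ φ : ℕ → ℕ, StrictMono φ → AsympCenter (x ∘ φ) z

/-- Δ-demiclosed mapping. -/
def DeltaDemiclosed (S : X → X) : Prop :=
  ∀ (x : ℕ → X) (z : X), DeltaConv x z →
    Tendsto (fun n => dist (x n) (S (x n))) atTop (nhds 0) → z ∈ FixSet S

/-- Orbital Δ-demiclosed mapping. -/
def OrbitalDeltaDemiclosed (S : X → X) : Prop :=
  ∀ (x : ℕ → X) (z : X),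
    (∃ (x0 : X) (φ : ℕ → ℕ), StrictMono φ ∧ ∀ n, x n = S^[φ n] x0) →
    DeltaConv x z →
    Tendsto (fun n => dist (x n) (S (x n))) atTop (nhds 0) → z ∈ FixSet S

/-- Composition `S (k-1) ∘ ⋯ ∘ S 0` of the first `k` mappings. -/
def compUpTo (S : ℕ → X → X) : ℕ → X → X
  | 0 => id
  | k + 1 => S k ∘ compUpTo S k

/-- A geodesically convex subset of a uniquely geodesic space: contains every
metric between-point of any two of its points. -/
def GConvex (C : Set X) : Prop :=
  ∀ x ∈ C, ∀ y ∈ C, ∀ z : X, dist x z + dist z y = dist x y → z ∈ C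

/-- Geodesic convexity of an extended-real-valued function. -/
def GConvexFun (f : X → EReal) : Prop :=
  ∀ x y z : X, ∀ t : ℝ, t ∈ Set.Icc (0 : ℝ) 1 →
    dist x z = t * dist x y → dist z y = (1 - t) * dist x y →
    f z ≤ ((1 - t : ℝ) : EReal) * f x + ((t : ℝ) : EReal) * f y

/-- Set of global minimizers. -/
def argminSet (f : X → EReal) : Set X := {x | ∀ y, f x ≤ f y}

/-- `R` is the resolvent of `f` with parameter `lam`. -/
def IsResolvent (f : X → EReal) (lam : ℝ) (R : X → X) : Prop :=
  ∀ x y : X,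
    f (R x) + (((dist x (R x)) ^ 2 / (2 * lam) : ℝ) : EReal) ≤
      f y + (((dist x y) ^ 2 / (2 * lam) : ℝ) : EReal)

/-! For every `q ∈ ⋂ Cᵢ` the CN inequality, applied along the dyadic points of the geodesic from
`Pᵢ y` to `q` (only midpoints are given), yields the projection inequality
`d(Pᵢ y, q)² + d(y, Pᵢ y)² ≤ d(y, q)²`. Hence the orbit `xₙ` of the cyclic map is Fejér monotone
with respect to `⋂ Cᵢ`, and telescoping the inequality along one cycle shows that every partial
composition moves `xₙ` by an amount tending to `0`.

The CN inequality also makes minimising sequences of the asymptotic radius Cauchy, so bounded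
sequences have asymptotic centers. If `w` is an asymptotic center of a subsequence, it is also one
of the nearby sequence `Pᵢ ⋯ P₀ xₙ` in `Cᵢ`, and the projection inequality gives
`r(Pᵢ w)² + d(w, Pᵢ w)² ≤ r(w)²`, so `w ∈ Cᵢ`. Finally the distance from a point of `⋂ Cᵢ` to
`xₙ` converges, so the radius of the center `z` of the whole orbit is the same along every
subsequence; this makes `z` an asymptotic center of every subsequence. -/

open Topology

theorem sq_limsup_le_of_sq_le {ι : Type*} {l : Filter ι} [l.NeBot] {a b c : ι → ℝ} {K : ℝ}
    (ha₀ : ∀ i, 0 ≤ a i) (hb₀ : ∀ i, 0 ≤ b i) (hc₀ : ∀ i, 0 ≤ c i)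
    (ha : IsBoundedUnder (· ≤ ·) l a) (hb : IsBoundedUnder (· ≤ ·) l b)
    (h : ∀ i, c i ^ 2 ≤ (a i ^ 2 + b i ^ 2) / 2 - K) :
    limsup c l ^ 2 ≤ (limsup a l ^ 2 + limsup b l ^ 2) / 2 - K := by
  set A := limsup a l
  set B := limsup b l
  set g : ℝ → ℝ := fun ε => ((A + ε) ^ 2 + (B + ε) ^ 2) / 2 - K
  have hg_le : ∀ ε > 0, limsup c l ^ 2 ≤ g ε := by
    intro ε hε
    have hev : ∀ᶠ i in l, c i ^ 2 ≤ g ε := by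
      filter_upwards [eventually_lt_of_limsup_lt (lt_add_of_pos_right A hε) ha,
        eventually_lt_of_limsup_lt (lt_add_of_pos_right B hε) hb] with i hai hbi
      have ha' : a i ^ 2 ≤ (A + ε) ^ 2 := pow_le_pow_left₀ (ha₀ i) hai.le 2
      have hb' : b i ^ 2 ≤ (B + ε) ^ 2 := pow_le_pow_left₀ (hb₀ i) hbi.le 2
      show c i ^ 2 ≤ ((A + ε) ^ 2 + (B + ε) ^ 2) / 2 - K
      linarith [h i]
    have hc : IsBoundedUnder (· ≤ ·) l c :=
      isBoundedUnder_of_eventually_le (hev.mono fun i hi => Real.le_sqrt_of_sq_le hi)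
    have hC₀ : 0 ≤ limsup c l := le_limsup_of_frequently_le (.of_forall hc₀) hc
    have hC : limsup c l ≤ √(g ε) :=
      limsup_le_of_le (isBoundedUnder_of ⟨0, hc₀⟩).isCoboundedUnder_le
        (hev.mono fun i hi => Real.le_sqrt_of_sq_le hi)
    obtain ⟨i, hi⟩ := hev.exists
    exact (Real.le_sqrt hC₀ ((sq_nonneg _).trans hi)).mp hC
  have hg : Tendsto g (𝓝[>] 0) (𝓝 (g 0)) :=
    ((by fun_prop : Continuous g).tendsto 0).mono_left nhdsWithin_le_nhds
  simpa [g] using ge_of_tendsto hg (eventually_nhdsWithin_of_forall hg_le)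

noncomputable def asympRadius (v : ℕ → X) (y : X) : ℝ := limsup (fun n => dist y (v n)) atTop

section AsympRadius

variable {v : ℕ → X}

theorem isBoundedUnder_le_dist (hv : Bornology.IsBounded (Set.range v)) (y : X) :
    IsBoundedUnder (· ≤ ·) atTop (fun n => dist y (v n)) := by
  obtain ⟨r, hr⟩ := (isBounded_iff_subset_closedBall y).mp hv
  exact isBoundedUnder_of ⟨r, fun n => by simpa [dist_comm] using hr ⟨n, rfl⟩⟩

theorem asympRadius_nonneg (hv : Bornology.IsBounded (Set.range v)) (y : X) :
    0 ≤ asympRadius v y :=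
  le_limsup_of_frequently_le (.of_forall fun _ => dist_nonneg) (isBoundedUnder_le_dist hv y)

theorem asympRadius_le_dist_add (hv : Bornology.IsBounded (Set.range v)) (y y' : X) :
    asympRadius v y ≤ dist y y' + asympRadius v y' := by
  calc asympRadius v y ≤ limsup (fun n => dist y y' + dist y' (v n)) atTop :=
        limsup_le_limsup (.of_forall fun n => dist_triangle _ _ _)
          (isBoundedUnder_of ⟨0, fun _ => dist_nonneg⟩).isCoboundedUnder_le
          (isBoundedUnder_le_add isBoundedUnder_const (isBoundedUnder_le_dist hv y'))
    _ = dist y y' + asympRadius v y' :=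
        limsup_const_add _ _ _ (isBoundedUnder_le_dist hv y')
          (isBoundedUnder_of ⟨0, fun _ => dist_nonneg⟩).isCoboundedUnder_le

theorem asympRadius_eq_of_tendsto {p : X} {l : ℝ}
    (h : Tendsto (fun n => dist (v n) p) atTop (𝓝 l)) : asympRadius v p = l := by
  simpa only [asympRadius, dist_comm p] using h.limsup_eq

theorem isBounded_range_of_tendsto_dist_zero {u : ℕ → X} (hv : Bornology.IsBounded (Set.range v))
    (huv : Tendsto (fun n => dist (u n) (v n)) atTop (𝓝 0)) :
    Bornology.IsBounded (Set.range u) := by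
  obtain ⟨E, hE⟩ := huv.bddAbove_range
  obtain ⟨r, hr⟩ := (isBounded_iff_subset_closedBall (v 0)).mp hv
  refine (isBounded_iff_subset_closedBall (v 0)).mpr ⟨E + r, ?_⟩
  rintro _ ⟨n, rfl⟩
  have h₁ : dist (u n) (v n) ≤ E := hE ⟨n, rfl⟩
  have h₂ : dist (v n) (v 0) ≤ r := hr ⟨n, rfl⟩
  exact (dist_triangle _ (v n) _).trans (add_le_add h₁ h₂)

theorem asympRadius_le_of_tendsto_dist {u : ℕ → X} (hv : Bornology.IsBounded (Set.range v))
    (huv : Tendsto (fun n => dist (u n) (v n)) atTop (𝓝 0)) (y : X) :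
    asympRadius u y ≤ asympRadius v y := by
  have hvu : Tendsto (fun n => dist (v n) (u n)) atTop (𝓝 0) := by
    simpa only [dist_comm] using huv
  have he : IsBoundedUnder (· ≤ ·) atTop (fun n => dist (v n) (u n)) := hvu.isBoundedUnder_le
  calc asympRadius u y ≤ limsup (fun n => dist y (v n) + dist (v n) (u n)) atTop :=
        limsup_le_limsup (.of_forall fun n => dist_triangle _ _ _)
          (isBoundedUnder_of ⟨0, fun _ => dist_nonneg⟩).isCoboundedUnder_le
          (isBoundedUnder_le_add (isBoundedUnder_le_dist hv y) he)
    _ ≤ asympRadius v y + limsup (fun n => dist (v n) (u n)) atTop :=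
        limsup_add_le (isBoundedUnder_of ⟨0, fun _ => dist_nonneg⟩) (isBoundedUnder_le_dist hv y)
          (isBoundedUnder_of ⟨0, fun _ => dist_nonneg⟩).isCoboundedUnder_le he
    _ = asympRadius v y := by rw [hvu.limsup_eq, add_zero]

theorem AsympCenter.of_tendsto_dist {u : ℕ → X} {w : X} (hw : AsympCenter v w)
    (hv : Bornology.IsBounded (Set.range v))
    (huv : Tendsto (fun n => dist (u n) (v n)) atTop (𝓝 0)) : AsympCenter u w := by
  have hvu : Tendsto (fun n => dist (v n) (u n)) atTop (𝓝 0) := by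
    simpa only [dist_comm] using huv
  intro y
  calc asympRadius u w ≤ asympRadius v w := asympRadius_le_of_tendsto_dist hv huv w
    _ ≤ asympRadius v y := hw y
    _ ≤ asympRadius u y :=
        asympRadius_le_of_tendsto_dist (isBounded_range_of_tendsto_dist_zero hv huv) hvu y

theorem AsympCenter.eq_of_forall_dist_sq_le {w p : X} (hw : AsympCenter v w)
    (hv : Bornology.IsBounded (Set.range v))
    (hp : ∀ n, dist p (v n) ^ 2 + dist w p ^ 2 ≤ dist w (v n) ^ 2) : w = p := by
  have hsq : asympRadius v p ^ 2 ≤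
      (asympRadius v w ^ 2 + asympRadius v w ^ 2) / 2 - dist w p ^ 2 :=
    sq_limsup_le_of_sq_le (fun _ => dist_nonneg) (fun _ => dist_nonneg) (fun _ => dist_nonneg)
      (isBoundedUnder_le_dist hv w) (isBoundedUnder_le_dist hv w) fun n => by linarith [hp n]
  have hwp : asympRadius v w ^ 2 ≤ asympRadius v p ^ 2 :=
    pow_le_pow_left₀ (asympRadius_nonneg hv w) (hw p) 2
  exact dist_le_zero.mp (by nlinarith [dist_nonneg (x := w) (y := p)])

end AsympRadius

section Fejer

variable {T : X → X} {q : X}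

theorem antitone_dist_iterate (hT : ∀ y, dist (T y) q ≤ dist y q) (x₀ : X) :
    Antitone fun n => dist (T^[n] x₀) q :=
  antitone_nat_of_succ_le fun n => by
    simpa only [Function.iterate_succ_apply'] using hT (T^[n] x₀)

theorem tendsto_dist_iterate (hT : ∀ y, dist (T y) q ≤ dist y q) (x₀ : X) :
    Tendsto (fun n => dist (T^[n] x₀) q) atTop (𝓝 (⨅ n, dist (T^[n] x₀) q)) :=
  tendsto_atTop_ciInf (antitone_dist_iterate hT x₀) ⟨0, by rintro _ ⟨n, rfl⟩; exact dist_nonneg⟩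

theorem isBounded_range_iterate (hT : ∀ y, dist (T y) q ≤ dist y q) (x₀ : X) :
    Bornology.IsBounded (Set.range fun n => T^[n] x₀) :=
  isBounded_closedBall.subset <| Set.range_subset_iff.mpr fun n =>
    mem_closedBall.mpr (antitone_dist_iterate hT x₀ (Nat.zero_le n))

theorem tendsto_sq_dist_iterate_sub_sq_dist_iterate_succ (hT : ∀ y, dist (T y) q ≤ dist y q)
    (x₀ : X) :
    Tendsto (fun n => dist (T^[n] x₀) q ^ 2 - dist (T^[n + 1] x₀) q ^ 2) atTop (𝓝 0) := by
  have h := tendsto_dist_iterate hT x₀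
  simpa using (h.pow 2).sub ((h.comp (tendsto_add_atTop_nat 1)).pow 2)

end Fejer

section CompUpTo

variable {S : ℕ → X → X} {m : ℕ} {q : X}

theorem dist_compUpTo_le_of_le
    (hS : ∀ i < m, ∀ x, dist (S i x) q ^ 2 + dist x (S i x) ^ 2 ≤ dist x q ^ 2) (x : X)
    {i j : ℕ} (hij : i ≤ j) (hjm : j ≤ m) : dist (compUpTo S j x) q ≤ dist (compUpTo S i x) q := by
  induction j, hij using Nat.le_induction with
  | base => exact le_rfl
  | succ j hij ih =>
    have h := hS j hjm (compUpTo S j x)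
    refine le_trans (le_of_pow_le_pow_left₀ two_ne_zero dist_nonneg ?_) (ih (by omega))
    exact le_of_add_le_of_nonneg_left h (sq_nonneg _)

theorem sq_dist_compUpTo_succ_le
    (hS : ∀ i < m, ∀ x, dist (S i x) q ^ 2 + dist x (S i x) ^ 2 ≤ dist x q ^ 2) (x : X)
    {i : ℕ} (hi : i < m) :
    dist (compUpTo S i x) (compUpTo S (i + 1) x) ^ 2 ≤
      dist x q ^ 2 - dist (compUpTo S m x) q ^ 2 := by
  have h := hS i hi (compUpTo S i x)
  have h₀ := pow_le_pow_left₀ dist_nonneg (dist_compUpTo_le_of_le hS x (Nat.zero_le i) hi.le) 2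
  have h₁ := pow_le_pow_left₀ dist_nonneg (dist_compUpTo_le_of_le hS x hi le_rfl) 2
  simp only [compUpTo, id, Function.comp_apply] at h h₀ h₁ ⊢
  linarith

theorem dist_compUpTo_le
    (hS : ∀ i < m, ∀ x, dist (S i x) q ^ 2 + dist x (S i x) ^ 2 ≤ dist x q ^ 2) (x : X)
    {j : ℕ} (hj : j ≤ m) :
    dist (compUpTo S j x) x ≤ j * √(dist x q ^ 2 - dist (compUpTo S m x) q ^ 2) := by
  induction j with
  | zero => simp [compUpTo]
  | succ j ih =>
    calc dist (compUpTo S (j + 1) x) x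
        ≤ dist (compUpTo S j x) (compUpTo S (j + 1) x) + dist (compUpTo S j x) x :=
          dist_triangle_left _ _ _
      _ ≤ √(dist x q ^ 2 - dist (compUpTo S m x) q ^ 2) +
            j * √(dist x q ^ 2 - dist (compUpTo S m x) q ^ 2) :=
          add_le_add (Real.le_sqrt_of_sq_le (sq_dist_compUpTo_succ_le hS x hj)) (ih (by omega))
      _ = (j + 1 : ℕ) * √(dist x q ^ 2 - dist (compUpTo S m x) q ^ 2) := by push_cast; ring

theorem tendsto_dist_compUpTo_iterate
    (hS : ∀ i < m, ∀ x, dist (S i x) q ^ 2 + dist x (S i x) ^ 2 ≤ dist x q ^ 2) (x₀ : X)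
    {j : ℕ} (hj : j ≤ m) :
    Tendsto (fun n => dist (compUpTo S j ((compUpTo S m)^[n] x₀)) ((compUpTo S m)^[n] x₀))
      atTop (𝓝 0) := by
  have hT : ∀ y, dist (compUpTo S m y) q ≤ dist y q := fun y =>
    dist_compUpTo_le_of_le hS y (Nat.zero_le m) le_rfl
  have hlim := ((tendsto_sq_dist_iterate_sub_sq_dist_iterate_succ hT x₀).sqrt).const_mul (j : ℝ)
  rw [Real.sqrt_zero, mul_zero] at hlim
  refine squeeze_zero (fun _ => dist_nonneg) (fun n => ?_) hlim
  simpa only [Function.iterate_succ_apply'] using dist_compUpTo_le hS _ hj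

end CompUpTo

namespace IsHadamard

variable {v : ℕ → X}

theorem exists_asympRadius_midpoint_sq_le (hX : IsHadamard X)
    (hv : Bornology.IsBounded (Set.range v)) (p q : X) :
    ∃ m, asympRadius v m ^ 2 ≤
      (asympRadius v p ^ 2 + asympRadius v q ^ 2) / 2 - dist p q ^ 2 / 4 := by
  obtain ⟨m, -, -, hm⟩ := hX.2 p q
  refine ⟨m, sq_limsup_le_of_sq_le (fun _ => dist_nonneg) (fun _ => dist_nonneg)
    (fun _ => dist_nonneg) (isBoundedUnder_le_dist hv p) (isBoundedUnder_le_dist hv q) fun n => ?_⟩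
  simpa only [dist_comm (v n)] using hm (v n)

theorem dist_sq_le_asympRadius (hX : IsHadamard X) (hv : Bornology.IsBounded (Set.range v))
    (p q : X) :
    dist p q ^ 2 ≤ 2 * asympRadius v p ^ 2 + 2 * asympRadius v q ^ 2 -
      4 * (⨅ y, asympRadius v y) ^ 2 := by
  obtain ⟨m, hm⟩ := hX.exists_asympRadius_midpoint_sq_le hv p q
  have : Nonempty X := ⟨p⟩
  have hinf : ⨅ y, asympRadius v y ≤ asympRadius v m :=
    ciInf_le ⟨0, by rintro _ ⟨y, rfl⟩; exact asympRadius_nonneg hv y⟩ m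
  have hinf₀ : 0 ≤ ⨅ y, asympRadius v y := le_ciInf (asympRadius_nonneg hv)
  nlinarith [pow_le_pow_left₀ hinf₀ hinf 2]

theorem exists_asympCenter (hX : IsHadamard X) (hv : Bornology.IsBounded (Set.range v)) :
    ∃ z, AsympCenter v z := by
  have : CompleteSpace X := hX.1
  set R := asympRadius v
  set r := ⨅ y, R y
  have hbdd : BddBelow (Set.range R) := ⟨0, by rintro _ ⟨y, rfl⟩; exact asympRadius_nonneg hv y⟩
  obtain ⟨u, hu_anti, hu_lim, hu_mem⟩ :=
    exists_seq_tendsto_sInf (Set.range_nonempty_iff_nonempty.mpr ⟨v 0⟩) hbdd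
  replace hu_lim : Tendsto u atTop (𝓝 r) := hu_lim
  choose y hy using hu_mem
  have hcauchy : CauchySeq y := by
    refine cauchySeq_of_le_tendsto_0 (fun N => √(4 * u N ^ 2 - 4 * r ^ 2))
      (fun j k N hj hk => Real.le_sqrt_of_sq_le ?_) ?_
    · have hj' : R (y j) ^ 2 ≤ u N ^ 2 :=
        pow_le_pow_left₀ (asympRadius_nonneg hv _) ((hy j).trans_le (hu_anti hj)) 2
      have hk' : R (y k) ^ 2 ≤ u N ^ 2 :=
        pow_le_pow_left₀ (asympRadius_nonneg hv _) ((hy k).trans_le (hu_anti hk)) 2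
      linarith [hX.dist_sq_le_asympRadius hv (y j) (y k)]
    · have h := (((hu_lim.pow 2).const_mul 4).sub_const (4 * r ^ 2)).sqrt
      simpa using h
  obtain ⟨z, hz⟩ := cauchySeq_tendsto_of_complete hcauchy
  have hzr : R z ≤ r := by
    have hlim : Tendsto (fun k => dist z (y k) + R (y k)) atTop (𝓝 (0 + r)) := by
      refine (tendsto_iff_dist_tendsto_zero.mp hz |>.congr fun k => dist_comm _ _).add ?_
      simpa only [hy] using hu_lim
    simpa using ge_of_tendsto' hlim fun k => asympRadius_le_dist_add hv z (y k)
  exact ⟨z, fun y' => hzr.trans (ciInf_le hbdd y')⟩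

theorem exists_mem_dist_sq_le_dyadic (hX : IsHadamard X) {C : Set X} (hC : GConvex C)
    {p q : X} (hp : p ∈ C) (hq : q ∈ C) (x : X) (k : ℕ) :
    ∃ c ∈ C, dist p c = (1 / 2) ^ k * dist p q ∧
      dist x c ^ 2 ≤ (1 - (1 / 2) ^ k) * dist x p ^ 2 + (1 / 2) ^ k * dist x q ^ 2 -
        (1 / 2) ^ k * (1 - (1 / 2) ^ k) * dist p q ^ 2 := by
  induction k with
  | zero => exact ⟨q, hq, by simp, by simp⟩
  | succ k ih =>
    obtain ⟨c, hc, hpc, hxc⟩ := ih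
    obtain ⟨m, hpm, hcm, hm⟩ := hX.2 p c
    have hmC : m ∈ C := hC p hp c hc m (by rw [hpm, dist_comm m c, hcm]; ring)
    refine ⟨m, hmC, by rw [hpm, hpc]; ring, ?_⟩
    have hm' := hm x
    rw [hpc] at hm'
    rw [pow_succ]
    linear_combination hm' + hxc / 2

theorem dist_sq_add_dist_sq_le_of_isNearest (hX : IsHadamard X) {C : Set X} (hC : GConvex C)
    {x p q : X} (hp : p ∈ C) (hnear : ∀ y ∈ C, dist x p ≤ dist x y) (hq : q ∈ C) :
    dist p q ^ 2 + dist x p ^ 2 ≤ dist x q ^ 2 := by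
  have hk : ∀ k : ℕ, (1 - (1 / 2 : ℝ) ^ k) * dist p q ^ 2 + dist x p ^ 2 ≤ dist x q ^ 2 := by
    intro k
    obtain ⟨c, hc, -, hxc⟩ := hX.exists_mem_dist_sq_le_dyadic hC hp hq x k
    have hpc : dist x p ^ 2 ≤ dist x c ^ 2 := pow_le_pow_left₀ dist_nonneg (hnear c hc) 2
    have ht : (0 : ℝ) < (1 / 2) ^ k := by positivity
    nlinarith
  have hlim : Tendsto (fun k : ℕ => (1 - (1 / 2 : ℝ) ^ k) * dist p q ^ 2 + dist x p ^ 2) atTop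
      (𝓝 ((1 - 0) * dist p q ^ 2 + dist x p ^ 2)) :=
    (((tendsto_pow_atTop_nhds_zero_of_lt_one (by norm_num) (by norm_num)).const_sub 1).mul_const
      _).add_const _
  simpa using le_of_tendsto' hlim hk

theorem exists_deltaConv_of_tendsto_dist (hX : IsHadamard X) {F : Set X} {x : ℕ → X}
    (hx : Bornology.IsBounded (Set.range x))
    (hlim : ∀ w ∈ F, ∃ l, Tendsto (fun n => dist (x n) w) atTop (𝓝 l))
    (hcen : ∀ φ : ℕ → ℕ, StrictMono φ → ∀ w, AsympCenter (x ∘ φ) w → w ∈ F) :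
    ∃ z ∈ F, DeltaConv x z := by
  obtain ⟨z, hz⟩ := hX.exists_asympCenter hx
  have hzF : z ∈ F := hcen id strictMono_id z hz
  refine ⟨z, hzF, hx, fun φ hφ y => ?_⟩
  obtain ⟨w, hw⟩ := hX.exists_asympCenter (hx.subset (Set.range_comp_subset_range φ x))
  obtain ⟨lz, hlz⟩ := hlim z hzF
  obtain ⟨lw, hlw⟩ := hlim w (hcen φ hφ w hw)
  calc asympRadius (x ∘ φ) z = lz := asympRadius_eq_of_tendsto (hlz.comp hφ.tendsto_atTop)
    _ = asympRadius x z := (asympRadius_eq_of_tendsto hlz).symm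
    _ ≤ asympRadius x w := hz w
    _ = lw := asympRadius_eq_of_tendsto hlw
    _ = asympRadius (x ∘ φ) w := (asympRadius_eq_of_tendsto (hlw.comp hφ.tendsto_atTop)).symm
    _ ≤ asympRadius (x ∘ φ) y := hw y

end IsHadamard

theorem stmt12_general {X : Type*} [MetricSpace X] (hX : IsHadamard X) (m : ℕ)
    (C : ℕ → Set X)
    (hcv : ∀ i < m, GConvex (C i))
    (hInt : (⋂ i ∈ Finset.range m, C i).Nonempty)
    (P : ℕ → X → X)
    (hP : ∀ i < m, ∀ x : X, P i x ∈ C i ∧ ∀ y ∈ C i, dist x (P i x) ≤ dist x y)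
    (x₀ : X) :
    ∃ z : X, z ∈ ⋂ i ∈ Finset.range m, C i ∧
      DeltaConv (fun n : ℕ => (compUpTo P m)^[n] x₀) z := by
  have hproj : ∀ i < m, ∀ x, ∀ c ∈ C i, dist (P i x) c ^ 2 + dist x (P i x) ^ 2 ≤ dist x c ^ 2 :=
    fun i hi x _ hc => hX.dist_sq_add_dist_sq_le_of_isNearest (hcv i hi) (hP i hi x).1
      (hP i hi x).2 hc
  have hF : ∀ q ∈ ⋂ i ∈ Finset.range m, C i, ∀ i < m, ∀ x,
      dist (P i x) q ^ 2 + dist x (P i x) ^ 2 ≤ dist x q ^ 2 := fun q hq i hi x =>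
    hproj i hi x q (Set.mem_iInter₂.mp hq i (Finset.mem_range.mpr hi))
  have hT : ∀ q ∈ ⋂ i ∈ Finset.range m, C i, ∀ y, dist (compUpTo P m y) q ≤ dist y q :=
    fun q hq y => dist_compUpTo_le_of_le (hF q hq) y (Nat.zero_le m) le_rfl
  obtain ⟨q, hq⟩ := hInt
  have hx := isBounded_range_iterate (hT q hq) x₀
  refine hX.exists_deltaConv_of_tendsto_dist hx
    (fun w hw => ⟨_, tendsto_dist_iterate (hT w hw) x₀⟩) fun φ hφ w hw => ?_
  refine Set.mem_iInter₂.mpr fun i hi => ?_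
  replace hi := Finset.mem_range.mp hi
  have hnear := (tendsto_dist_compUpTo_iterate (hF q hq) x₀ hi).comp hφ.tendsto_atTop
  have hxφ := hx.subset (Set.range_comp_subset_range φ _)
  have hwP : w = P i w := (hw.of_tendsto_dist hxφ hnear).eq_of_forall_dist_sq_le
    (isBounded_range_of_tendsto_dist_zero hxφ hnear) fun n => hproj i hi w _ (hP i hi _).1
  exact hwP ▸ (hP i hi w).1

theorem stmt12 {X : Type*} [MetricSpace X] (hX : IsHadamard X) (m : ℕ)
    (C : ℕ → Set X)
    (hne : ∀ i < m, (C i).Nonempty) (hcl : ∀ i < m, IsClosed (C i))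
    (hcv : ∀ i < m, GConvex (C i))
    (hInt : (⋂ i ∈ Finset.range m, C i).Nonempty)
    (P : ℕ → X → X)
    (hP : ∀ i < m, ∀ x : X, P i x ∈ C i ∧ ∀ y ∈ C i, dist x (P i x) ≤ dist x y)
    (x₀ : X) :
    ∃ z : X, z ∈ ⋂ i ∈ Finset.range m, C i ∧
      DeltaConv (fun n : ℕ => (compUpTo P m)^[n] x₀) z :=
  stmt12_general hX m C hcv hInt P hP x₀
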